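/- arXiv:2011.00256 — 2 statements merged into one kernel-verified Lean document; each statement's English description precedes it below -/
import Mathlib

section
/- (Inequality of Dragomir, Cerone and Roumeliotis) Let λ ∈ [0,1], let x satisfy -1 + 3λ/2 ≤ x ≤ 1 - 3λ/2, and let f : [-1,1] → ℝ be differentiable with |f'(t)| ≤ M for all t ∈ (-1,1). Then |∫_{-1}^1 f(t) dt - λ[f(-1) + f(1)] - 2(1-λ) f(x)| ≤ [λ² + (1-λ)² + x²] M. -/
open MeasureTheory intervalIntegral Set

/-!
Split `[-1, 1]` at `x`. On `[a, b]` with `c ∈ [a, b]`, the rule `(c - a) f(a) + (b - c) f(b)`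
replaces `f` by `f(a)` on `[a, c]` and by `f(b)` on `[c, b]`. By the mean value theorem `f` is
`M`-Lipschitz, so the error is at most
`M (∫_a^c (t - a) + ∫_c^b (b - t)) = M ((c - a)² + (b - c)²) / 2`.
The nodes `c = λ - 1` on `[-1, x]` and `c = 1 - λ` on `[x, 1]` reassemble
`λ [f(-1) + f(1)] + 2 (1 - λ) f(x)`, and the two error bounds add up to
`(λ² + (1 - λ)² + x²) M`.
-/

theorem abs_sub_le_mul_of_hasDerivAt_of_abs_le {f f' : ℝ → ℝ} {a b M s t : ℝ}
    (hf : ContinuousOn f (Icc a b)) (hf' : ∀ u ∈ Ioo a b, HasDerivAt f (f' u) u)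
    (hM : ∀ u ∈ Ioo a b, |f' u| ≤ M) (hs : s ∈ Icc a b) (ht : t ∈ Icc a b) :
    |f t - f s| ≤ M * |t - s| := by
  wlog hst : s < t generalizing s t
  · rcases (not_lt.1 hst).eq_or_lt with rfl | hts
    · simp
    · rw [abs_sub_comm, abs_sub_comm t]
      exact this ht hs hts
  obtain ⟨ξ, hξ, hslope⟩ := exists_hasDerivAt_eq_slope f f' hst
    (hf.mono (Icc_subset_Icc hs.1 ht.2)) fun u hu => hf' u (Ioo_subset_Ioo hs.1 ht.2 hu)
  have hts : f t - f s = f' ξ * (t - s) := by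
    rw [hslope, div_mul_cancel₀ _ (sub_ne_zero.2 hst.ne')]
  rw [hts, abs_mul]
  exact mul_le_mul_of_nonneg_right (hM ξ (Ioo_subset_Ioo hs.1 ht.2 hξ)) (abs_nonneg _)

theorem integral_abs_sub_of_mem_Icc {a b c : ℝ} (hc : c ∈ Icc a b) :
    ∫ t in a..b, |t - c| = ((c - a) ^ 2 + (b - c) ^ 2) / 2 := by
  have hint : ∀ p q : ℝ, IntervalIntegrable (fun t => |t - c|) volume p q := fun p q =>
    (continuous_id.sub continuous_const).abs.intervalIntegrable p q
  have hleft : ∫ t in a..c, |t - c| = ∫ t in a..c, (c - t) :=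
    integral_congr fun t ht => by
      rw [uIcc_of_le hc.1] at ht
      simp only [abs_of_nonpos (sub_nonpos.2 ht.2), neg_sub]
  have hright : ∫ t in c..b, |t - c| = ∫ t in c..b, (t - c) :=
    integral_congr fun t ht => by
      rw [uIcc_of_le hc.2] at ht
      simp only [abs_of_nonneg (sub_nonneg.2 ht.1)]
  rw [← integral_add_adjacent_intervals (hint a c) (hint c b), hleft, hright,
    integral_sub intervalIntegrable_const intervalIntegrable_id,
    integral_sub intervalIntegrable_id intervalIntegrable_const]
  simp only [intervalIntegral.integral_const, integral_id, smul_eq_mul]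
  ring

theorem abs_integral_sub_mul_le_integral {f : ℝ → ℝ} {a b e M : ℝ} (hab : a ≤ b)
    (hf : IntervalIntegrable f volume a b) (hlip : ∀ t ∈ Icc a b, |f t - f e| ≤ M * |t - e|) :
    |(∫ t in a..b, f t) - (b - a) * f e| ≤ M * ∫ t in a..b, |t - e| := by
  have hsub : (∫ t in a..b, f t) - (b - a) * f e = ∫ t in a..b, (f t - f e) := by
    rw [integral_sub hf intervalIntegrable_const, intervalIntegral.integral_const, smul_eq_mul]
  rw [hsub, ← intervalIntegral.integral_const_mul]
  exact intervalIntegral.norm_integral_le_of_norm_le hab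
    (ae_of_all _ fun t ht => (Real.norm_eq_abs _).trans_le (hlip t (Ioc_subset_Icc_self ht)))
    (((continuous_id.sub continuous_const).abs.const_smul M).intervalIntegrable a b)

theorem abs_integral_sub_two_point_le {f f' : ℝ → ℝ} {a b c M : ℝ} (hc : c ∈ Icc a b)
    (hf : ContinuousOn f (Icc a b)) (hf' : ∀ t ∈ Ioo a b, HasDerivAt f (f' t) t)
    (hM : ∀ t ∈ Ioo a b, |f' t| ≤ M) :
    |(∫ t in a..b, f t) - ((c - a) * f a + (b - c) * f b)| ≤
      M * (((c - a) ^ 2 + (b - c) ^ 2) / 2) := by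
  have hab : a ≤ b := hc.1.trans hc.2
  have hlip : ∀ s ∈ Icc a b, ∀ t ∈ Icc a b, |f t - f s| ≤ M * |t - s| := fun s hs t ht =>
    abs_sub_le_mul_of_hasDerivAt_of_abs_le hf hf' hM hs ht
  have hint_ac : IntervalIntegrable f volume a c :=
    (hf.mono (Icc_subset_Icc_right hc.2)).intervalIntegrable_of_Icc hc.1
  have hint_cb : IntervalIntegrable f volume c b :=
    (hf.mono (Icc_subset_Icc_left hc.1)).intervalIntegrable_of_Icc hc.2
  have hleft := abs_integral_sub_mul_le_integral hc.1 hint_ac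
    fun t ht => hlip a (left_mem_Icc.2 hab) t (Icc_subset_Icc_right hc.2 ht)
  have hright := abs_integral_sub_mul_le_integral hc.2 hint_cb
    fun t ht => hlip b (right_mem_Icc.2 hab) t (Icc_subset_Icc_left hc.1 ht)
  rw [integral_abs_sub_of_mem_Icc (left_mem_Icc.2 hc.1)] at hleft
  rw [integral_abs_sub_of_mem_Icc (right_mem_Icc.2 hc.2)] at hright
  rw [← integral_add_adjacent_intervals hint_ac hint_cb]
  calc _ = |((∫ t in a..c, f t) - (c - a) * f a) + ((∫ t in c..b, f t) - (b - c) * f b)| := by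
        ring_nf
    _ ≤ _ := (abs_add_le _ _).trans (add_le_add hleft hright)
    _ = _ := by ring

theorem dragomir_cerone_roumeliotis (M lam x : ℝ)
    (hlam : lam ∈ Set.Icc (0:ℝ) 1)
    (hx : -1 + 3 * lam / 2 ≤ x ∧ x ≤ 1 - 3 * lam / 2)
    (f f' : ℝ → ℝ)
    (hf : ∀ t ∈ Set.Icc (-1:ℝ) 1, HasDerivWithinAt f (f' t) (Set.Icc (-1) 1) t)
    (hbound : ∀ t ∈ Set.Ioo (-1:ℝ) 1, |f' t| ≤ M) :
    |(∫ t in (-1:ℝ)..1, f t) - lam * (f (-1) + f 1) - 2 * (1 - lam) * f x| ≤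
      (lam ^ 2 + (1 - lam) ^ 2 + x ^ 2) * M := by
  obtain ⟨hlam0, hlam1⟩ := hlam
  have hxmem : x ∈ Icc (-1 : ℝ) 1 := ⟨by linarith [hx.1], by linarith [hx.2]⟩
  have hcont : ContinuousOn f (Icc (-1) 1) := fun t ht => (hf t ht).continuousWithinAt
  have hderiv : ∀ t ∈ Ioo (-1 : ℝ) 1, HasDerivAt f (f' t) t := fun t ht =>
    (hf t (Ioo_subset_Icc_self ht)).hasDerivAt (Icc_mem_nhds ht.1 ht.2)
  have hleft := abs_integral_sub_two_point_le (c := lam - 1) ⟨by linarith, by linarith [hx.1]⟩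
    (hcont.mono (Icc_subset_Icc_right hxmem.2))
    (fun t ht => hderiv t (Ioo_subset_Ioo_right hxmem.2 ht))
    (fun t ht => hbound t (Ioo_subset_Ioo_right hxmem.2 ht))
  have hright := abs_integral_sub_two_point_le (c := 1 - lam) ⟨by linarith [hx.2], by linarith⟩
    (hcont.mono (Icc_subset_Icc_left hxmem.1))
    (fun t ht => hderiv t (Ioo_subset_Ioo_left hxmem.1 ht))
    (fun t ht => hbound t (Ioo_subset_Ioo_left hxmem.1 ht))
  rw [← integral_add_adjacent_intervals
    ((hcont.mono (Icc_subset_Icc_right hxmem.2)).intervalIntegrable_of_Icc hxmem.1)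
    ((hcont.mono (Icc_subset_Icc_left hxmem.1)).intervalIntegrable_of_Icc hxmem.2)]
  calc _ = |((∫ t in (-1)..x, f t) - ((lam - 1 - -1) * f (-1) + (x - (lam - 1)) * f x)) +
        ((∫ t in x..1, f t) - ((1 - lam - x) * f x + (1 - (1 - lam)) * f 1))| := by
        ring_nf
    _ ≤ _ := (abs_add_le _ _).trans (add_le_add hleft hright)
    _ = _ := by ring
end

section
/- (Liu–Park four-point inequality with double internal nodes, second-derivative bound) Let 0 ≤ x ≤ 1 and let f : [-1,1] → ℝ be twice differentiable with |f''(t)| ≤ M for all t ∈ [-1,1]. Then |∫_{-1}^1 f(t) dt - (1/2)[f(-1) + f(-x) + f(x) + f(1)] + (x/2)[f'(x) - f'(-x)]| ≤ (1/6)(1 - 3x² + 4x³) M. In particular, the bound function x ↦ (1/6)(1 - 3x² + 4x³) attains its minimum on [0,1] at x = 1/2 with value 1/8. -/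
open MeasureTheory intervalIntegral Set

/-!
Peano kernel argument. On each of `[-1, -x]`, `[-x, x]`, `[x, 1]`, integrate by parts twice
against a quadratic `t ^ 2 / 2 + c * t` with second derivative `1`, choosing `c = 1/2, 0, -1/2` so
that it vanishes at `-1` and `1`. The boundary terms then add up to exactly the quadrature rule, so
the error is `∫ K f''` for the kernel `K(t) = t (t + 1) / 2, t ^ 2 / 2, t (t - 1) / 2` on the three
pieces, and is bounded by `M ∫ |K| = M (1 - 3x² + 4x³) / 6`. The minimum over `x` follows from
`16y³ - 12y² + 1 = (2y - 1)² (4y + 1)`.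
-/

section PeanoKernel

variable {f f' f'' g h : ℝ → ℝ} {a b M : ℝ}

theorem intervalIntegrable_of_hasDerivAt_of_abs_le (hab : a ≤ b)
    (hf' : ∀ t ∈ Ioo a b, HasDerivAt f' (f'' t) t) (hM : ∀ t ∈ Ioo a b, |f'' t| ≤ M) :
    IntervalIntegrable f'' volume a b := by
  rw [intervalIntegrable_iff_integrableOn_Ioo_of_le hab]
  have hderiv : EqOn (deriv f') f'' (Ioo a b) := fun t ht => (hf' t ht).deriv
  refine Integrable.mono' (integrable_const M)
    ((measurable_deriv f').aestronglyMeasurable.congr ?_) ?_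
  · exact (ae_restrict_iff' measurableSet_Ioo).2 (ae_of_all _ hderiv)
  · exact (ae_restrict_iff' measurableSet_Ioo).2 (ae_of_all _ hM)

theorem integral_eq_sub_add_integral_mul_deriv2 (hab : a ≤ b) (c : ℝ)
    (hfc : ContinuousOn f (Icc a b)) (hf'c : ContinuousOn f' (Icc a b))
    (hf : ∀ t ∈ Ioo a b, HasDerivAt f (f' t) t) (hf' : ∀ t ∈ Ioo a b, HasDerivAt f' (f'' t) t)
    (hint : IntervalIntegrable f'' volume a b) :
    ∫ t in a..b, f t =
      ((b + c) * f b - (b ^ 2 / 2 + c * b) * f' b) - ((a + c) * f a - (a ^ 2 / 2 + c * a) * f' a)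
        + ∫ t in a..b, (t ^ 2 / 2 + c * t) * f'' t := by
  have hq : Continuous fun t : ℝ => t ^ 2 / 2 + c * t := by fun_prop
  have hfi : IntervalIntegrable f volume a b :=
    (hfc.mono (uIcc_of_le hab).subset).intervalIntegrable
  have hqi : IntervalIntegrable (fun t => (t ^ 2 / 2 + c * t) * f'' t) volume a b :=
    hint.continuousOn_mul hq.continuousOn
  have hFTC : ∫ t in a..b, (f t - (t ^ 2 / 2 + c * t) * f'' t) =
      ((b + c) * f b - (b ^ 2 / 2 + c * b) * f' b) -
        ((a + c) * f a - (a ^ 2 / 2 + c * a) * f' a) := by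
    refine integral_eq_sub_of_hasDeriv_right_of_le
      (f := fun t => (t + c) * f t - (t ^ 2 / 2 + c * t) * f' t) hab ?_ (fun t ht => ?_)
      (hfi.sub hqi)
    · exact ((continuousOn_id.add continuousOn_const).mul hfc).sub (hq.continuousOn.mul hf'c)
    have hq' : HasDerivAt (fun s : ℝ => s ^ 2 / 2 + c * s) (t + c) t :=
      (((hasDerivAt_pow 2 t).div_const 2).add ((hasDerivAt_id t).const_mul c)).congr_deriv
        (by norm_num)
    have hF := (((hasDerivAt_id t).add_const c).mul (hf t ht)).sub (hq'.mul (hf' t ht))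
    exact (hF.congr_deriv (by rw [id]; ring)).hasDerivWithinAt
  rw [integral_sub hfi hqi] at hFTC
  linarith

theorem abs_integral_mul_le_of_abs_le (hab : a ≤ b) (hg : ContinuousOn g (Icc a b))
    (hM : ∀ t ∈ Ioc a b, |h t| ≤ M) :
    |∫ t in a..b, g t * h t| ≤ M * ∫ t in a..b, |g t| := by
  rw [← intervalIntegral.integral_const_mul]
  refine (Real.norm_eq_abs _).symm.le.trans <|
    norm_integral_le_of_norm_le hab (ae_of_all _ fun t ht => ?_) ?_
  · rw [Real.norm_eq_abs, abs_mul, mul_comm M]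
    exact mul_le_mul_of_nonneg_left (hM t ht) (abs_nonneg _)
  · exact ((hg.mono (uIcc_of_le hab).subset).abs.const_mul M |>.intervalIntegrable)

theorem integral_quadratic (c : ℝ) :
    ∫ t in a..b, (t ^ 2 / 2 + c * t) = (b ^ 3 - a ^ 3) / 6 + c * (b ^ 2 - a ^ 2) / 2 := by
  rw [intervalIntegral.integral_add (Continuous.intervalIntegrable (by fun_prop) _ _)
    (Continuous.intervalIntegrable (by fun_prop) _ _), intervalIntegral.integral_div,
    intervalIntegral.integral_const_mul, integral_pow, integral_id]
  ring

end PeanoKernel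

section FourPoint

variable {f f' f'' : ℝ → ℝ} {x : ℝ}

theorem four_point_error_eq (hx : x ∈ Icc (0 : ℝ) 1)
    (hfc : ContinuousOn f (Icc (-1) 1)) (hf'c : ContinuousOn f' (Icc (-1) 1))
    (hf : ∀ t ∈ Ioo (-1 : ℝ) 1, HasDerivAt f (f' t) t)
    (hf' : ∀ t ∈ Ioo (-1 : ℝ) 1, HasDerivAt f' (f'' t) t)
    (hint : IntervalIntegrable f'' volume (-1) 1) :
    (∫ t in (-1 : ℝ)..1, f t) - (1 / 2) * (f (-1) + f (-x) + f x + f 1) +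
        (x / 2) * (f' x - f' (-x)) =
      (∫ t in (-1 : ℝ)..(-x), (t ^ 2 / 2 + 1 / 2 * t) * f'' t) +
        (∫ t in (-x)..x, (t ^ 2 / 2 + 0 * t) * f'' t) +
        ∫ t in x..1, (t ^ 2 / 2 + -1 / 2 * t) * f'' t := by
  obtain ⟨hx0, hx1⟩ := hx
  have hsub : ∀ {a b : ℝ}, -1 ≤ a → a ≤ b → b ≤ 1 → uIcc a b ⊆ uIcc (-1 : ℝ) 1 :=
    fun ha hab hb => by
      rw [uIcc_of_le hab, uIcc_of_le (by norm_num)]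
      exact Icc_subset_Icc ha hb
  have hpiece : ∀ (c : ℝ) {a b : ℝ}, -1 ≤ a → a ≤ b → b ≤ 1 → ∫ t in a..b, f t =
      ((b + c) * f b - (b ^ 2 / 2 + c * b) * f' b) -
        ((a + c) * f a - (a ^ 2 / 2 + c * a) * f' a) +
        ∫ t in a..b, (t ^ 2 / 2 + c * t) * f'' t :=
    fun c a b ha hab hb => integral_eq_sub_add_integral_mul_deriv2 hab c
      (hfc.mono (Icc_subset_Icc ha hb)) (hf'c.mono (Icc_subset_Icc ha hb))
      (fun t ht => hf t (Ioo_subset_Ioo ha hb ht)) (fun t ht => hf' t (Ioo_subset_Ioo ha hb ht))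
      (hint.mono_set (hsub ha hab hb))
  have hfi : IntervalIntegrable f volume (-1) 1 :=
    (hfc.mono (uIcc_of_le (by norm_num)).subset).intervalIntegrable
  have hfi' : ∀ {a b : ℝ}, -1 ≤ a → a ≤ b → b ≤ 1 → IntervalIntegrable f volume a b :=
    fun ha hab hb => hfi.mono_set (hsub ha hab hb)
  rw [← integral_add_adjacent_intervals (b := x) (hfi' le_rfl (by linarith) hx1)
      (hfi' (by linarith) hx1 le_rfl),
    ← integral_add_adjacent_intervals (b := -x) (hfi' le_rfl (by linarith) (by linarith))
      (hfi' (by linarith) (by linarith) hx1),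
    hpiece (1 / 2) le_rfl (by linarith) (by linarith), hpiece 0 (by linarith) (by linarith) hx1,
    hpiece (-1 / 2) (by linarith) hx1 le_rfl]
  ring

theorem integral_abs_four_point_kernel (hx : x ∈ Icc (0 : ℝ) 1) :
    (∫ t in (-1 : ℝ)..(-x), |t ^ 2 / 2 + 1 / 2 * t|) + (∫ t in (-x)..x, |t ^ 2 / 2 + 0 * t|) +
        ∫ t in x..1, |t ^ 2 / 2 + -1 / 2 * t| = (1 - 3 * x ^ 2 + 4 * x ^ 3) / 6 := by
  obtain ⟨hx0, hx1⟩ := hx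
  have h₁ : ∫ t in (-1 : ℝ)..(-x), |t ^ 2 / 2 + 1 / 2 * t| =
      ∫ t in (-1 : ℝ)..(-x), -(t ^ 2 / 2 + 1 / 2 * t) := by
    refine integral_congr fun t ht => abs_of_nonpos ?_
    rw [uIcc_of_le (by linarith)] at ht
    nlinarith [ht.1, ht.2]
  have h₂ : ∫ t in (-x)..x, |t ^ 2 / 2 + 0 * t| = ∫ t in (-x)..x, (t ^ 2 / 2 + 0 * t) :=
    integral_congr fun t _ => abs_of_nonneg (by nlinarith [sq_nonneg t])
  have h₃ : ∫ t in x..1, |t ^ 2 / 2 + -1 / 2 * t| = ∫ t in x..1, -(t ^ 2 / 2 + -1 / 2 * t) := by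
    refine integral_congr fun t ht => abs_of_nonpos ?_
    rw [uIcc_of_le hx1] at ht
    nlinarith [ht.1, ht.2]
  rw [h₁, h₂, h₃, intervalIntegral.integral_neg, intervalIntegral.integral_neg,
    integral_quadratic, integral_quadratic, integral_quadratic]
  ring

end FourPoint

theorem liu_park_four_point (M x : ℝ) (hx : x ∈ Set.Icc (0:ℝ) 1)
    (f f' f'' : ℝ → ℝ)
    (hf : ∀ t ∈ Set.Icc (-1:ℝ) 1, HasDerivWithinAt f (f' t) (Set.Icc (-1) 1) t)
    (hf' : ∀ t ∈ Set.Icc (-1:ℝ) 1, HasDerivWithinAt f' (f'' t) (Set.Icc (-1) 1) t)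
    (hbound : ∀ t ∈ Set.Icc (-1:ℝ) 1, |f'' t| ≤ M) :
    |(∫ t in (-1:ℝ)..1, f t) - (1 / 2) * (f (-1) + f (-x) + f x + f 1) +
        (x / 2) * (f' x - f' (-x))| ≤ (1 / 6) * (1 - 3 * x ^ 2 + 4 * x ^ 3) * M ∧
    (∀ y ∈ Set.Icc (0:ℝ) 1, (1:ℝ) / 8 ≤ (1 / 6) * (1 - 3 * y ^ 2 + 4 * y ^ 3)) ∧
    (1 / 6) * (1 - 3 * ((1:ℝ) / 2) ^ 2 + 4 * ((1:ℝ) / 2) ^ 3) = 1 / 8 := by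
  refine ⟨?_, fun y hy => by nlinarith [sq_nonneg (2 * y - 1), hy.1], by norm_num⟩
  have hinterior {g g' : ℝ → ℝ}
      (hg : ∀ t ∈ Icc (-1 : ℝ) 1, HasDerivWithinAt g (g' t) (Icc (-1) 1) t) (t : ℝ)
      (ht : t ∈ Ioo (-1 : ℝ) 1) : HasDerivAt g (g' t) t :=
    (hg t (Ioo_subset_Icc_self ht)).hasDerivAt (Icc_mem_nhds ht.1 ht.2)
  have hint : IntervalIntegrable f'' volume (-1) 1 :=
    intervalIntegrable_of_hasDerivAt_of_abs_le (by norm_num) (hinterior hf')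
      fun t ht => hbound t (Ioo_subset_Icc_self ht)
  have hpiece (c : ℝ) {a b : ℝ} (ha : -1 ≤ a) (hab : a ≤ b) (hb : b ≤ 1) :
      |∫ t in a..b, (t ^ 2 / 2 + c * t) * f'' t| ≤ M * ∫ t in a..b, |t ^ 2 / 2 + c * t| :=
    abs_integral_mul_le_of_abs_le hab (by fun_prop)
      fun t ht => hbound t (Icc_subset_Icc ha hb (Ioc_subset_Icc_self ht))
  rw [four_point_error_eq hx (fun t ht => (hf t ht).continuousWithinAt)
    (fun t ht => (hf' t ht).continuousWithinAt) (hinterior hf) (hinterior hf') hint]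
  obtain ⟨hx0, hx1⟩ := hx
  calc _ ≤ M * (∫ t in (-1 : ℝ)..(-x), |t ^ 2 / 2 + 1 / 2 * t|) +
          M * (∫ t in (-x)..x, |t ^ 2 / 2 + 0 * t|) +
          M * ∫ t in x..1, |t ^ 2 / 2 + -1 / 2 * t| := by
        refine (abs_add_three _ _ _).trans (add_le_add_three ?_ ?_ ?_)
        · exact hpiece _ le_rfl (by linarith) (by linarith)
        · exact hpiece _ (by linarith) (by linarith) hx1
        · exact hpiece _ (by linarith) hx1 le_rfl
    _ = _ := by rw [← mul_add, ← mul_add, integral_abs_four_point_kernel ⟨hx0, hx1⟩]; ring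
end
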